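/- Let D be a digraph of order n ≥ 6 with minimum out-degree and minimum in-degree both at least two, satisfying condition (*). Let C := x_1x_2…x_{n-1}x_1 be a cycle of length n−1 in D (subscripts modulo n−1), and let y be the vertex not on C. If for some i ∈ [1,n−1] both arcs x_iy and yx_i are in D, then D contains a Hamiltonian bypass. -/

import Mathlib

/-!
If `y` sends arcs to two consecutive cycle vertices `xⱼ, xⱼ₊₁`, then `y xⱼ₊₁ … xⱼ` is a
bypass; dually if two consecutive cycle vertices send arcs to `y`. Otherwise neither the out- nor
the in-neighbours of `y` on `C` contain two consecutive vertices, so `d(y) ≤ n - 1`. As `y` and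
`xᵢ₊₁` are non-adjacent with common in-neighbour `xᵢ`, condition (*) forces `d(y) = n - 1`, so
the out-neighbours of `y` are every other vertex of `C` (in particular `y → xᵢ₊₂`), and
`d(xᵢ₊₁) ≥ n` with all neighbours of `xᵢ₊₁` on `C`. Counting then gives `xᵥ ≠ xᵢ₊₂` with
`xᵢ₊₁ → xᵥ` and `xᵥ₋₁ → xᵢ₊₁`; moving `xᵢ₊₁` between `xᵥ₋₁` and `xᵥ` turns `C` into a path
`xᵢ₊₂ … xᵥ₋₁ xᵢ₊₁ xᵥ … xᵢ`, and `y` followed by this path is a bypass.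
-/

open Finset

variable {V : Type*}

/-- Out-degree of a vertex. -/
def outDeg [Fintype V] (A : V → V → Prop) [DecidableRel A] (v : V) : ℕ :=
  (Finset.univ.filter (fun u => A v u)).card

/-- In-degree of a vertex. -/
def inDeg [Fintype V] (A : V → V → Prop) [DecidableRel A] (v : V) : ℕ :=
  (Finset.univ.filter (fun u => A u v)).card

/-- Degree of a vertex: out-degree plus in-degree. -/
def deg [Fintype V] (A : V → V → Prop) [DecidableRel A] (v : V) : ℕ :=
  outDeg A v + inDeg A v

/-- Two vertices are adjacent if there is an arc between them in some direction. -/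
def Adj (A : V → V → Prop) (u v : V) : Prop := A u v ∨ A v u

/-- Condition (*): for every pair of non-adjacent vertices with a common in-neighbour,
`min {d(x), d(y)} ≥ n - 1` and `d(x) + d(y) ≥ 2n - 1`. -/
def CondStar [Fintype V] (A : V → V → Prop) [DecidableRel A] : Prop :=
  ∀ x y : V, x ≠ y → ¬ Adj A x y → (∃ z : V, A z x ∧ A z y) →
    min (deg A x) (deg A y) ≥ Fintype.card V - 1 ∧
    deg A x + deg A y ≥ 2 * Fintype.card V - 1

/-- A Hamiltonian bypass: an ordering `x₁, …, xₙ` of all vertices such that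
`x₁x₂, …, x_{n-1}xₙ` and `x₁xₙ` are all arcs. -/
def HamBypass (A : V → V → Prop) : Prop :=
  ∃ l : List V, l.Nodup ∧ (∀ v : V, v ∈ l) ∧ l.Chain' A ∧
    ∃ a b : V, l.head? = some a ∧ l.getLast? = some b ∧ A a b

section Bypass

variable {A : V → V → Prop} {y a b : V} {l : List V}

theorem hamBypass_of_cons (hnd : (y :: l).Nodup) (hall : ∀ v, v ∈ y :: l) (hl : l.IsChain A)
    (ha : l.head? = some a) (hb : l.getLast? = some b) (hya : A y a) (hyb : A y b) :
    HamBypass A := by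
  refine ⟨y :: l, hnd, hall, List.isChain_cons.2 ⟨by simp [ha, hya], hl⟩, y, b, rfl, ?_, hyb⟩
  rw [List.getLast?_cons, hb]
  rfl

theorem hamBypass_of_append (hnd : (y :: l).Nodup) (hall : ∀ v, v ∈ y :: l) (hl : l.IsChain A)
    (ha : l.head? = some a) (hb : l.getLast? = some b) (hay : A a y) (hby : A b y) :
    HamBypass A := by
  have hperm : (l ++ [y]).Perm (y :: l) := List.perm_append_singleton y l
  refine ⟨l ++ [y], hperm.nodup_iff.2 hnd, fun v => hperm.mem_iff.2 (hall v),
    List.isChain_append.2 ⟨hl, List.isChain_singleton y, by simp [hb, hby]⟩, a, y, ?_, ?_, hay⟩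
  · simp [List.head?_append, ha]
  · simp

end Bypass

section CyclePath

variable {m : ℕ} {x : ZMod m → V}

def cyclePath (x : ZMod m → V) (j : ZMod m) (k : ℕ) : List V :=
  (List.range k).map fun t : ℕ => x (j + t)

theorem cyclePath_succ (j : ZMod m) (k : ℕ) :
    cyclePath x j (k + 1) = x j :: cyclePath x (j + 1) k := by
  simp only [cyclePath, List.range_succ_eq_map, List.map_cons, List.map_map]
  refine congrArg₂ _ (by simp) (List.map_congr_left fun t _ => congrArg x ?_)
  push_cast
  ring

theorem cyclePath_add (j : ZMod m) (k l : ℕ) :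
    cyclePath x j (k + l) = cyclePath x j k ++ cyclePath x (j + k) l := by
  simp only [cyclePath, List.range_add, List.map_append, List.map_map]
  congr 2 with t
  simp [add_assoc]

theorem head?_cyclePath (j : ZMod m) (k : ℕ) : (cyclePath x j (k + 1)).head? = some (x j) := by
  simp [cyclePath_succ]

theorem getLast?_cyclePath (j : ZMod m) (k : ℕ) :
    (cyclePath x j (k + 1)).getLast? = some (x (j + k)) := by
  simp [cyclePath, List.getLast?_map, List.getLast?_range]

theorem isChain_cyclePath {A : V → V → Prop} (hcyc : ∀ i, A (x i) (x (i + 1))) (j : ZMod m)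
    (k : ℕ) : (cyclePath x j k).IsChain A := by
  cases k with
  | zero => simp [cyclePath]
  | succ k =>
    refine (List.isChain_map _).2 ((List.isChain_range_succ _ _).2 fun t _ => ?_)
    simpa [add_assoc] using hcyc (j + t)

theorem nodup_cyclePath (hx : Function.Injective x) (j : ZMod m) {k : ℕ} (hk : k ≤ m) :
    (cyclePath x j k).Nodup := by
  refine List.nodup_range.map_on fun s hs t ht hst => ?_
  have hst := congrArg ZMod.val (add_left_cancel (hx hst))
  rwa [ZMod.val_natCast_of_lt (by simp at hs; omega),
    ZMod.val_natCast_of_lt (by simp at ht; omega)] at hst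

theorem nodup_cons_of_perm_cyclePath {y : V} (hx : Function.Injective x) (hy : ∀ j, y ≠ x j)
    {P : List V} {j : ZMod m} (hP : P.Perm (cyclePath x j m)) : (y :: P).Nodup := by
  refine List.nodup_cons.2 ⟨fun hyP => ?_, hP.nodup_iff.2 (nodup_cyclePath hx j le_rfl)⟩
  obtain ⟨t, -, ht⟩ := List.mem_map.1 (hP.subset hyP)
  exact hy _ ht.symm

theorem mem_cyclePath [NeZero m] (j i : ZMod m) : x i ∈ cyclePath x j m :=
  List.mem_map.2 ⟨(i - j).val, List.mem_range.2 (ZMod.val_lt _), by simp⟩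

end CyclePath

section ZModCounting

variable {m : ℕ} {S T : Finset (ZMod m)}

theorem card_union_image_add_one (hS : ∀ j ∈ S, j + 1 ∉ S) :
    #(S ∪ S.image (· + 1)) = 2 * #S := by
  have hdisj : Disjoint S (S.image (· + 1)) := by
    rw [Finset.disjoint_left]
    rintro _ hj hj'
    obtain ⟨k, hk, rfl⟩ := Finset.mem_image.1 hj'
    exact hS k hk hj
  rw [Finset.card_union_of_disjoint hdisj, Finset.card_image_of_injective _ (add_left_injective 1)]
  ring

variable [NeZero m]

theorem two_mul_card_le_of_forall_add_one_notMem (hS : ∀ j ∈ S, j + 1 ∉ S) : 2 * #S ≤ m := by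
  have := Finset.card_le_univ (S ∪ S.image (· + 1))
  rwa [card_union_image_add_one hS, ZMod.card] at this

theorem mem_or_sub_one_mem_of_forall_add_one_notMem (hS : ∀ j ∈ S, j + 1 ∉ S) (h : m ≤ 2 * #S)
    (j : ZMod m) : j ∈ S ∨ j - 1 ∈ S := by
  have huniv : S ∪ S.image (· + 1) = Finset.univ := by
    have := two_mul_card_le_of_forall_add_one_notMem hS
    exact Finset.eq_univ_of_card _ (by rw [card_union_image_add_one hS, ZMod.card]; omega)
  rcases Finset.mem_union.1 (huniv ▸ Finset.mem_univ j) with h | h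
  · exact Or.inl h
  · obtain ⟨k, hk, rfl⟩ := Finset.mem_image.1 h
    exact Or.inr (by simpa using hk)

theorem exists_mem_sub_one_mem_of_card_lt {o : ZMod m} (ho : o ∉ T) (h : m < #S + #T) :
    ∃ v ∈ S, v ≠ o + 1 ∧ v - 1 ∈ T := by
  by_contra! hno
  have hdisj : Disjoint ((S.erase (o + 1)).image (· - 1)) (insert o T) := by
    rw [Finset.disjoint_left]
    rintro _ hw hw'
    obtain ⟨v, hv, rfl⟩ := Finset.mem_image.1 hw
    obtain ⟨hvo, hvS⟩ := Finset.mem_erase.1 hv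
    rcases Finset.mem_insert.1 hw' with h | h
    · exact hvo (by rw [← h, sub_add_cancel])
    · exact hno v hvS hvo h
  have hle := Finset.card_le_univ ((S.erase (o + 1)).image (· - 1) ∪ insert o T)
  rw [Finset.card_union_of_disjoint hdisj, Finset.card_image_of_injective _ sub_left_injective,
    Finset.card_insert_of_notMem ho, ZMod.card] at hle
  have := Finset.pred_card_le_card_erase (s := S) (a := o + 1)
  omega

theorem exists_eq_add_of_ne_of_ne_add_one {o v : ZMod m} (hvo : v ≠ o) (hvo1 : v ≠ o + 1) :
    ∃ k l : ℕ, v = o + 1 + (k + 1 : ℕ) ∧ m = k + 1 + (l + 1) + 1 := by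
  have hd : ((v - o).val : ZMod m) = v - o := ZMod.natCast_zmod_val _
  have h0 : (v - o).val ≠ 0 := by rwa [ZMod.val_ne_zero, sub_ne_zero]
  have h1 : (v - o).val ≠ 1 := fun h => hvo1 (by rw [h, Nat.cast_one] at hd; rw [hd]; ring)
  obtain ⟨k, hk⟩ : ∃ k, (v - o).val = k + 2 := ⟨(v - o).val - 2, by omega⟩
  refine ⟨k, m - (v - o).val - 1, ?_, ?_⟩
  · rw [hk] at hd
    push_cast at hd ⊢
    linear_combination -hd
  · have := ZMod.val_lt (v - o)
    omega

end ZModCounting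

section CycleAndVertex

variable {A : V → V → Prop} {m : ℕ} [NeZero m] {x : ZMod m → V} {y : V}

theorem cyclePath_self_eq (j : ZMod m) : cyclePath x j m = cyclePath x j (m - 1 + 1) :=
  congrArg (cyclePath x j) (Nat.succ_pred_eq_of_pos (NeZero.pos m)).symm

theorem head?_cyclePath_self (j : ZMod m) : (cyclePath x j m).head? = some (x j) := by
  rw [cyclePath_self_eq, head?_cyclePath]

theorem getLast?_cyclePath_self (j : ZMod m) :
    (cyclePath x j m).getLast? = some (x (j - 1)) := by
  rw [cyclePath_self_eq, getLast?_cyclePath, Nat.cast_pred (NeZero.pos m), ZMod.natCast_self,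
    zero_sub, ← sub_eq_add_neg]

theorem eq_or_exists_eq_of_card_eq_add_one [Fintype V] (hcard : Fintype.card V = m + 1)
    (hx : Function.Injective x) (hy : ∀ j, y ≠ x j) (v : V) : v = y ∨ ∃ j, v = x j := by
  classical
  have hy' : y ∉ Finset.univ.image x := by simpa using fun j => (hy j).symm
  have huniv : insert y (Finset.univ.image x) = Finset.univ := by
    apply Finset.eq_univ_of_card
    rw [Finset.card_insert_of_notMem hy', Finset.card_image_of_injective _ hx, Finset.card_univ,
      ZMod.card, hcard]
  have hv : v ∈ insert y (Finset.univ.image x) := huniv ▸ Finset.mem_univ v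
  simpa [eq_comm] using hv

theorem mem_cons_of_perm_cyclePath (hcover : ∀ v, v = y ∨ ∃ j, v = x j) {P : List V}
    {j : ZMod m} (hP : P.Perm (cyclePath x j m)) (v : V) : v ∈ y :: P := by
  rcases hcover v with rfl | ⟨i, rfl⟩
  · exact List.mem_cons_self
  · exact List.mem_cons_of_mem _ (hP.mem_iff.2 (mem_cyclePath j i))

theorem hamBypass_of_arcs_to_consecutive (hx : Function.Injective x) (hy : ∀ j, y ≠ x j)
    (hcover : ∀ v, v = y ∨ ∃ j, v = x j) (hcyc : ∀ i, A (x i) (x (i + 1)))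
    {j : ZMod m} (hj : A y (x j)) (hj1 : A y (x (j + 1))) : HamBypass A :=
  hamBypass_of_cons (nodup_cons_of_perm_cyclePath hx hy (.refl _))
    (mem_cons_of_perm_cyclePath hcover (.refl _)) (isChain_cyclePath hcyc _ _)
    (head?_cyclePath_self _) (getLast?_cyclePath_self _) hj1 (by rwa [add_sub_cancel_right])

theorem hamBypass_of_arcs_from_consecutive (hx : Function.Injective x) (hy : ∀ j, y ≠ x j)
    (hcover : ∀ v, v = y ∨ ∃ j, v = x j) (hcyc : ∀ i, A (x i) (x (i + 1)))
    {j : ZMod m} (hj : A (x j) y) (hj1 : A (x (j + 1)) y) : HamBypass A :=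
  hamBypass_of_append (nodup_cons_of_perm_cyclePath hx hy (.refl _))
    (mem_cons_of_perm_cyclePath hcover (.refl _)) (isChain_cyclePath hcyc _ _)
    (head?_cyclePath_self _) (getLast?_cyclePath_self _) hj1 (by rwa [add_sub_cancel_right])

theorem hamBypass_of_insert_between (hx : Function.Injective x) (hy : ∀ j, y ≠ x j)
    (hcover : ∀ v, v = y ∨ ∃ j, v = x j) (hcyc : ∀ i, A (x i) (x (i + 1)))
    {o v : ZMod m} (hvo : v ≠ o) (hvo1 : v ≠ o + 1) (hov : A (x o) (x v))
    (hpred : A (x (v - 1)) (x o)) (hy1 : A y (x (o + 1)))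
    (hy2 : A y (x (o - 1))) : HamBypass A := by
  obtain ⟨k, l, hv, hm⟩ := exists_eq_add_of_ne_of_ne_add_one hvo hvo1
  set P := cyclePath x (o + 1) (k + 1) ++ x o :: cyclePath x v (l + 1)
  have hP : P.Perm (cyclePath x o m) := by
    rw [show cyclePath x o m = cyclePath x o (k + 1 + (l + 1) + 1) from congrArg _ hm,
      cyclePath_succ, cyclePath_add, ← hv]
    exact List.perm_middle
  refine hamBypass_of_cons (nodup_cons_of_perm_cyclePath hx hy hP)
    (mem_cons_of_perm_cyclePath hcover hP) ?_ (a := x (o + 1)) (b := x (o - 1)) ?_ ?_ hy1 hy2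
  · refine List.isChain_append.2 ⟨isChain_cyclePath hcyc _ _,
      List.isChain_cons.2 ⟨?_, isChain_cyclePath hcyc _ _⟩, ?_⟩
    · simpa [head?_cyclePath] using hov
    · simp only [getLast?_cyclePath, List.head?_cons, Option.mem_def, Option.some.injEq]
      rintro _ rfl _ rfl
      convert hpred using 3
      rw [hv]
      push_cast
      ring
  · simp [P, List.head?_append, head?_cyclePath]
  · rw [List.getLast?_append_of_ne_nil _ (List.cons_ne_nil _ _), List.getLast?_cons,
      getLast?_cyclePath]
    have hm0 : ((k + 1 + (l + 1) + 1 : ℕ) : ZMod m) = 0 := hm ▸ ZMod.natCast_self m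
    have hvl : v + l = o - 1 := by
      rw [hv]
      push_cast at hm0 ⊢
      linear_combination hm0
    simp [hvl]

end CycleAndVertex

section Degrees

variable [Fintype V] {A : V → V → Prop} [DecidableRel A] {m : ℕ} [NeZero m] {x : ZMod m → V}
  {y : V}

theorem outDeg_eq_card_of_not_adj (hx : Function.Injective x)
    (hcover : ∀ v, v = y ∨ ∃ j, v = x j) {v : V} (hv : ¬ A v y) :
    outDeg A v = #{j | A v (x j)} := by
  refine (Finset.card_bij (fun j _ => x j) (by simp) (fun _ _ _ _ h => hx h) fun u hu => ?_).symm
  rcases hcover u with rfl | ⟨j, rfl⟩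
  · exact absurd (Finset.mem_filter.1 hu).2 hv
  · exact ⟨j, by simpa using hu, rfl⟩

theorem inDeg_eq_card_of_not_adj (hx : Function.Injective x)
    (hcover : ∀ v, v = y ∨ ∃ j, v = x j) {v : V} (hv : ¬ A y v) :
    inDeg A v = #{j | A (x j) v} := by
  refine (Finset.card_bij (fun j _ => x j) (by simp) (fun _ _ _ _ h => hx h) fun u hu => ?_).symm
  rcases hcover u with rfl | ⟨j, rfl⟩
  · exact absurd (Finset.mem_filter.1 hu).2 hv
  · exact ⟨j, by simpa using hu, rfl⟩

theorem hamBypass_of_no_consecutive (hloop : ∀ v, ¬ A v v) (hstar : CondStar A)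
    (hcard : Fintype.card V = m + 1) (hx : Function.Injective x) (hy : ∀ j, y ≠ x j)
    (hcyc : ∀ i, A (x i) (x (i + 1))) (hout : ∀ j, A y (x j) → ¬ A y (x (j + 1)))
    (hin : ∀ j, A (x j) y → ¬ A (x (j + 1)) y) {i : ZMod m} (h1 : A (x i) y) (h2 : A y (x i)) :
    HamBypass A := by
  have hcover := eq_or_exists_eq_of_card_eq_add_one hcard hx hy
  have hn1 : ¬ A y (x (i + 1)) := hout i h2
  have hn2 : ¬ A (x (i + 1)) y := hin i h1
  obtain ⟨hmin, hsum⟩ := hstar y (x (i + 1)) (hy _) (by rintro (h | h) <;> contradiction)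
    ⟨x i, h1, hcyc i⟩
  simp only [deg, hcard, outDeg_eq_card_of_not_adj hx hcover (hloop y),
    inDeg_eq_card_of_not_adj hx hcover (hloop y), outDeg_eq_card_of_not_adj hx hcover hn2,
    inDeg_eq_card_of_not_adj hx hcover hn1] at hmin hsum
  set Out : Finset (ZMod m) := {j | A y (x j)}
  set In : Finset (ZMod m) := {j | A (x j) y}
  have hOut : ∀ j ∈ Out, j + 1 ∉ Out := by simpa [Out] using hout
  have hIn : ∀ j ∈ In, j + 1 ∉ In := by simpa [In] using hin
  have hOutCard := two_mul_card_le_of_forall_add_one_notMem hOut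
  have hInCard := two_mul_card_le_of_forall_add_one_notMem hIn
  have hy2 : A y (x (i + 1 + 1)) := by
    rcases mem_or_sub_one_mem_of_forall_add_one_notMem hOut (by omega) (i + 1 + 1) with h | h
    · simpa [Out] using h
    · exact absurd (by simpa [Out] using h) hn1
  obtain ⟨v, hv, hv1, hvT⟩ := exists_mem_sub_one_mem_of_card_lt (S := {j | A (x (i + 1)) (x j)})
    (T := {j | A (x j) (x (i + 1))}) (o := i + 1) (by simpa using hloop _) (by omega)
  simp only [Finset.mem_filter, Finset.mem_univ, true_and] at hv hvT
  exact hamBypass_of_insert_between hx hy hcover hcyc (fun h => hloop _ (h ▸ hv)) hv1 hv hvT hy2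
    (by rwa [add_sub_cancel_right])

end Degrees

theorem stmt9_general [Fintype V] (A : V → V → Prop) [DecidableRel A]
    (hloop : Irreflexive A)
    (n : ℕ) (hcard : Fintype.card V = n)
    (hstar : CondStar A)
    (x : ZMod (n - 1) → V) (hinj : Function.Injective x)
    (hcyc : ∀ i : ZMod (n - 1), A (x i) (x (i + 1)))
    (y : V) (hy : ∀ i : ZMod (n - 1), y ≠ x i)
    (i : ZMod (n - 1)) (h1 : A (x i) y) (h2 : A y (x i)) :
    HamBypass A := by
  -- `ZMod 0 = ℤ` cannot inject into the finite type `V`.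
  have : NeZero (n - 1) := ⟨fun h => by
    have := Finite.of_injective x hinj
    rw [h] at this
    exact Infinite.not_finite (α := ℤ) this⟩
  have hcard' : Fintype.card V = n - 1 + 1 := by
    have := Fintype.card_pos_iff.2 ⟨y⟩
    omega
  have hcover := eq_or_exists_eq_of_card_eq_add_one hcard' hinj hy
  by_cases hout : ∃ j, A y (x j) ∧ A y (x (j + 1))
  · obtain ⟨j, hj, hj1⟩ := hout
    exact hamBypass_of_arcs_to_consecutive hinj hy hcover hcyc hj hj1
  by_cases hin : ∃ j, A (x j) y ∧ A (x (j + 1)) y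
  · obtain ⟨j, hj, hj1⟩ := hin
    exact hamBypass_of_arcs_from_consecutive hinj hy hcover hcyc hj hj1
  exact hamBypass_of_no_consecutive hloop hstar hcard' hinj hy hcyc
    (fun j hj hj1 => hout ⟨j, hj, hj1⟩) (fun j hj hj1 => hin ⟨j, hj, hj1⟩) h1 h2

theorem stmt9 [Fintype V] [DecidableEq V] (A : V → V → Prop) [DecidableRel A]
    (hloop : Irreflexive A)
    (n : ℕ) (hcard : Fintype.card V = n) (hn : 6 ≤ n)
    (hout : ∀ v : V, 2 ≤ outDeg A v) (hin : ∀ v : V, 2 ≤ inDeg A v)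
    (hstar : CondStar A)
    (x : ZMod (n - 1) → V) (hinj : Function.Injective x)
    (hcyc : ∀ i : ZMod (n - 1), A (x i) (x (i + 1)))
    (y : V) (hy : ∀ i : ZMod (n - 1), y ≠ x i)
    (i : ZMod (n - 1)) (h1 : A (x i) y) (h2 : A y (x i)) :
    HamBypass A :=
  stmt9_general A hloop n hcard hstar x hinj hcyc y hy i h1 h2
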